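/- In the concrete quasi-free CAR model with λ : ℤ → ℝ, 0 < λ_l < 1: let L = {l₁ < l₂ < ... < l_p} be a finite subset of ℤ. Then there exists a function c assigning to each subset L₁ ⊆ L a NONZERO real number c(L₁), such that (a_{l₁}∘a_{l₂}∘⋯∘a_{l_p}∘a_{l_p}*∘⋯∘a_{l₂}*∘a_{l₁}*) Ω = Σ_{L₁ ⊆ L} c(L₁)·e_{(L₁,L₁)}, the sum running over all (possibly empty) subsets L₁ of L. -/

import Mathlib

/- The concrete quasi-free CAR model: `H = ℓ²(Finset ℤ × Finset ℤ)` with orthonormal basis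
`e (A, B)`, vacuum `Ω = e (∅, ∅)`, and operators `a l`, `b l`, `G` given on the basis by the
quasi-free formulas with symbol `λ` (diagonal, `R h_l = λ_l h_l`). -/

noncomputable section

/-- The GNS Hilbert space: `ℓ²` over pairs of finite subsets of `ℤ`. -/
abbrev CARSpace := lp (fun _ : Finset ℤ × Finset ℤ => ℂ) 2

/-- The orthonormal basis vector `e_{(A,B)}`. -/
def carE (p : Finset ℤ × Finset ℤ) : CARSpace := lp.single 2 p 1

/-- The vacuum vector `Ω = e_{(∅,∅)}`. -/
def carΩ : CARSpace := carE (∅, ∅)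

/-- `n(l, X)` = number of elements of `X` strictly below `l`. -/
def nlt (l : ℤ) (X : Finset ℤ) : ℕ := (X.filter fun j => j < l).card

/-- `a` is the family of quasi-free annihilation-type operators `a_l = π_R(a(h_l))`:
`a_l e_{(A,B)} = √(1−λ_l)·(−1)^{|B|}·(−1)^{n(l,A)}·[l ∉ A]·e_{(A∪{l},B)}
              + √(λ_l)·(−1)^{n(l,B)}·[l ∈ B]·e_{(A,B∖{l})}`. -/
def IsCAR_a (lam : ℤ → ℝ) (a : ℤ → CARSpace →L[ℂ] CARSpace) : Prop :=
  ∀ (l : ℤ) (A B : Finset ℤ),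
    a l (carE (A, B)) =
      ((Real.sqrt (1 - lam l) : ℂ) * (-1) ^ B.card * (-1) ^ nlt l A *
          (if l ∈ A then 0 else 1)) • carE (insert l A, B) +
      ((Real.sqrt (lam l) : ℂ) * (-1) ^ nlt l B *
          (if l ∈ B then 1 else 0)) • carE (A, B.erase l)

/-- `b` is the family of commutant quasi-free operators:
`b_l e_{(A,B)} = √(λ_l)·(−1)^{|B|}·(−1)^{n(l,A)}·[l ∉ A]·e_{(A∪{l},B)}
              − √(1−λ_l)·(−1)^{n(l,B)}·[l ∈ B]·e_{(A,B∖{l})}`. -/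
def IsCAR_b (lam : ℤ → ℝ) (b : ℤ → CARSpace →L[ℂ] CARSpace) : Prop :=
  ∀ (l : ℤ) (A B : Finset ℤ),
    b l (carE (A, B)) =
      ((Real.sqrt (lam l) : ℂ) * (-1) ^ B.card * (-1) ^ nlt l A *
          (if l ∈ A then 0 else 1)) • carE (insert l A, B) -
      ((Real.sqrt (1 - lam l) : ℂ) * (-1) ^ nlt l B *
          (if l ∈ B then 1 else 0)) • carE (A, B.erase l)

/-- `G = Γ⊗Γ` : `G e_{(A,B)} = (−1)^{|A|+|B|} e_{(A,B)}`. -/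
def IsCAR_G (G : CARSpace →L[ℂ] CARSpace) : Prop :=
  ∀ (A B : Finset ℤ), G (carE (A, B)) = ((-1 : ℂ) ^ (A.card + B.card)) • carE (A, B)

/-!
The vacuum has no particles, so each `a_l*` with `l ∉ A ∪ B` acts on `e_{(A,B)}` only by
adding `l` to `B`, with coefficient `±√λ_l ≠ 0`; hence `a_{l_p}* ⋯ a_{l_1}* Ω` is a nonzero
multiple of `e_{(∅,L)}`. Each `a_l` with `l ∈ B ∖ A` then splits `e_{(A,B)}` into
`e_{(A ∪ {l}, B)}` and `e_{(A, B ∖ {l})}` with coefficients `±√(1-λ_l)` and `±√λ_l`, both nonzero.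
After running through `L`, every `K ⊆ L` is reached along exactly one branch (`l ∈ K` iff `l` was
created rather than annihilated), ending at `e_{(K,K)}` with a product of nonzero coefficients.
-/
lemma carE_apply (p q : Finset ℤ × Finset ℤ) : carE p q = if q = p then 1 else 0 := by
  simp [carE, lp.single_apply, Pi.single_apply]

lemma inner_carE_left (p : Finset ℤ × Finset ℤ) (x : CARSpace) : inner ℂ (carE p) x = x p := by
  simp [carE, lp.inner_single_left]

lemma star_apply_carE_apply (T : CARSpace →L[ℂ] CARSpace) (p q : Finset ℤ × Finset ℤ) :
    star T (carE p) q = starRingEnd ℂ (T (carE q) p) := by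
  rw [← inner_carE_left, ContinuousLinearMap.star_eq_adjoint,
    ContinuousLinearMap.adjoint_inner_right, ← inner_conj_symm, inner_carE_left]

lemma nlt_insert_self (l : ℤ) (X : Finset ℤ) : nlt l (insert l X) = nlt l X := by
  rw [nlt, nlt, Finset.filter_insert, if_neg (lt_irrefl l)]

lemma nlt_erase_self (l : ℤ) (X : Finset ℤ) : nlt l (X.erase l) = nlt l X := by
  rw [nlt, nlt, Finset.filter_erase, Finset.erase_eq_of_notMem (by simp)]

lemma Finset.eq_insert_and_notMem_iff {α : Type*} [DecidableEq α] {a : α} {s t : Finset α} :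
    t = insert a s ∧ a ∉ s ↔ s = t.erase a ∧ a ∈ t := by
  constructor
  · rintro ⟨rfl, ha⟩
    exact ⟨(erase_insert ha).symm, mem_insert_self a s⟩
  · rintro ⟨rfl, ha⟩
    exact ⟨(insert_erase ha).symm, notMem_erase a t⟩

section CARModel

variable {lam : ℤ → ℝ} {a : ℤ → CARSpace →L[ℂ] CARSpace}

lemma star_a_apply (ha : IsCAR_a lam a) (l : ℤ) (A B : Finset ℤ) :
    star (a l) (carE (A, B)) =
      ((Real.sqrt (1 - lam l) : ℂ) * (-1) ^ B.card * (-1) ^ nlt l A *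
          (if l ∈ A then 1 else 0)) • carE (A.erase l, B) +
      ((Real.sqrt (lam l) : ℂ) * (-1) ^ nlt l B *
          (if l ∈ B then 0 else 1)) • carE (A, insert l B) := by
  refine lp.ext (funext fun ⟨A', B'⟩ => ?_)
  rw [star_apply_carE_apply, ha]
  simp only [lp.coeFn_add, lp.coeFn_smul, Pi.add_apply, Pi.smul_apply, smul_eq_mul, carE_apply,
    map_add, map_mul, map_pow, map_neg, map_one, Complex.conj_ofReal, apply_ite (starRingEnd ℂ),
    map_zero, ← ite_not (l ∈ A'), ← ite_not (l ∈ B), mul_boole, ← ite_and]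
  have creation : (A, B) = (insert l A', B') ∧ l ∉ A' ↔ (A', B') = (A.erase l, B) ∧ l ∈ A := by
    rw [Prod.mk.injEq, Prod.mk.injEq, and_right_comm, Finset.eq_insert_and_notMem_iff,
      and_right_comm, eq_comm (a := B)]
  have annihilation : (A, B) = (A', B'.erase l) ∧ l ∈ B' ↔ (A', B') = (A, insert l B) ∧ l ∉ B := by
    rw [Prod.mk.injEq, Prod.mk.injEq, and_assoc, ← Finset.eq_insert_and_notMem_iff,
      ← and_assoc, eq_comm (a := A)]
  simp only [creation, annihilation]
  congr 1 <;> split_ifs with h <;> try rfl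
  · obtain ⟨h, hl⟩ := h
    simp only [Prod.mk.injEq] at h
    obtain ⟨rfl, rfl⟩ := h
    rw [nlt_erase_self]
  · obtain ⟨h, hl⟩ := h
    simp only [Prod.mk.injEq] at h
    obtain ⟨rfl, rfl⟩ := h
    rw [nlt_insert_self]

def creationCoeff (lam : ℤ → ℝ) (l : ℤ) (A B : Finset ℤ) : ℝ :=
  Real.sqrt (1 - lam l) * (-1) ^ (B.card + nlt l A)

def annihilationCoeff (lam : ℤ → ℝ) (l : ℤ) (B : Finset ℤ) : ℝ :=
  Real.sqrt (lam l) * (-1) ^ nlt l B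

lemma creationCoeff_ne_zero {lam : ℤ → ℝ} {l : ℤ} (hl : lam l < 1) (A B : Finset ℤ) :
    creationCoeff lam l A B ≠ 0 :=
  mul_ne_zero (Real.sqrt_ne_zero'.mpr (sub_pos.mpr hl)) (pow_ne_zero _ (by norm_num))

lemma annihilationCoeff_ne_zero {lam : ℤ → ℝ} {l : ℤ} (hl : 0 < lam l) (B : Finset ℤ) :
    annihilationCoeff lam l B ≠ 0 :=
  mul_ne_zero (Real.sqrt_ne_zero'.mpr hl) (pow_ne_zero _ (by norm_num))

lemma a_apply_carE_of_notMem_of_mem (ha : IsCAR_a lam a) {l : ℤ} {A B : Finset ℤ}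
    (hA : l ∉ A) (hB : l ∈ B) :
    a l (carE (A, B)) = (creationCoeff lam l A B : ℂ) • carE (insert l A, B) +
      (annihilationCoeff lam l B : ℂ) • carE (A, B.erase l) := by
  simp [ha l A B, hA, hB, creationCoeff, annihilationCoeff, pow_add, mul_assoc]

lemma star_a_apply_carE_of_notMem (ha : IsCAR_a lam a) {l : ℤ} {A B : Finset ℤ}
    (hA : l ∉ A) (hB : l ∉ B) :
    star (a l) (carE (A, B)) = (annihilationCoeff lam l B : ℂ) • carE (A, insert l B) := by
  simp [star_a_apply ha, hA, hB, annihilationCoeff]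

lemma exists_prod_star_a_apply_carE (ha : IsCAR_a lam a) (hlam : ∀ l, 0 < lam l)
    (s : List ℤ) (hs : s.Nodup) {A B : Finset ℤ} (hA : ∀ l ∈ s, l ∉ A) (hB : ∀ l ∈ s, l ∉ B) :
    ∃ γ : ℝ, γ ≠ 0 ∧
      (s.map fun l => star (a l)).prod (carE (A, B)) = (γ : ℂ) • carE (A, B ∪ s.toFinset) := by
  induction s with
  | nil => exact ⟨1, one_ne_zero, by simp⟩
  | cons l t ih =>
    obtain ⟨hlt, ht⟩ := List.nodup_cons.mp hs
    obtain ⟨γ, hγ, hrec⟩ := ih ht (fun x hx => hA x (.tail l hx)) (fun x hx => hB x (.tail l hx))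
    have hlBt : l ∉ B ∪ t.toFinset := by simpa [hB l (.head t)] using hlt
    refine ⟨γ * annihilationCoeff lam l (B ∪ t.toFinset),
      mul_ne_zero hγ (annihilationCoeff_ne_zero (hlam l) _), ?_⟩
    rw [List.map_cons, List.prod_cons, mul_apply_eq_comp, hrec, map_smul,
      star_a_apply_carE_of_notMem ha (hA l (.head t)) hlBt, smul_smul, List.toFinset_cons,
      Finset.union_insert, Complex.ofReal_mul]

lemma exists_prod_a_apply_carE (ha : IsCAR_a lam a) (hlam : ∀ l, 0 < lam l ∧ lam l < 1)
    (s : List ℤ) (hs : s.Nodup) {A B : Finset ℤ} (hA : ∀ l ∈ s, l ∉ A) (hB : ∀ l ∈ s, l ∈ B) :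
    ∃ c : Finset ℤ → ℝ, (∀ K ⊆ s.toFinset, c K ≠ 0) ∧
      (s.map a).prod (carE (A, B)) =
        ∑ K ∈ s.toFinset.powerset, (c K : ℂ) • carE (A ∪ K, B \ s.toFinset ∪ K) := by
  induction s with
  | nil => exact ⟨fun _ => 1, fun _ _ => one_ne_zero, by simp⟩
  | cons l t ih =>
    obtain ⟨hlt, ht⟩ := List.nodup_cons.mp hs
    obtain ⟨c, hc, hrec⟩ := ih ht (fun x hx => hA x (.tail l hx)) (fun x hx => hB x (.tail l hx))
    rw [List.toFinset_cons]
    set S := t.toFinset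
    have hlS : l ∉ S := by simpa [S] using hlt
    have hlA : l ∉ A := hA l (.head t)
    have hlB : l ∈ B \ S := Finset.mem_sdiff.mpr ⟨hB l (.head t), hlS⟩
    have hlK : ∀ K ∈ S.powerset, l ∉ K := fun K hK h => hlS (Finset.mem_powerset.mp hK h)
    let cr K := creationCoeff lam l (A ∪ K) (B \ S ∪ K)
    let an K := annihilationCoeff lam l (B \ S ∪ K)
    refine ⟨fun K => if l ∈ K then c (K.erase l) * cr (K.erase l) else c K * an K, ?_, ?_⟩
    · intro K hK
      dsimp only
      split_ifs with hl
      · exact mul_ne_zero (hc _ (Finset.subset_insert_iff.mp hK))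
          (creationCoeff_ne_zero (hlam l).2 _ _)
      · exact mul_ne_zero (hc _ ((Finset.subset_insert_iff_of_notMem hl).mp hK))
          (annihilationCoeff_ne_zero (hlam l).1 _)
    have step : ∀ K ∈ S.powerset, a l ((c K : ℂ) • carE (A ∪ K, B \ S ∪ K)) =
        ((c K * an K : ℝ) : ℂ) • carE (A ∪ K, B \ insert l S ∪ K) +
        ((c K * cr K : ℝ) : ℂ) • carE (A ∪ insert l K, B \ insert l S ∪ insert l K) := by
      intro K hK
      have erase_eq : (B \ S ∪ K).erase l = B \ insert l S ∪ K := by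
        rw [Finset.erase_union_distrib, Finset.erase_eq_of_notMem (hlK K hK), Finset.sdiff_insert]
      have insert_eq : B \ insert l S ∪ insert l K = B \ S ∪ K := by
        rw [Finset.union_insert, ← Finset.insert_union, Finset.sdiff_insert,
          Finset.insert_erase hlB]
      rw [map_smul, a_apply_carE_of_notMem_of_mem ha (by simp [hlA, hlK K hK])
        (Finset.mem_union_left K hlB), smul_add, smul_smul, smul_smul, add_comm, erase_eq,
        ← Finset.union_insert, insert_eq, Complex.ofReal_mul, Complex.ofReal_mul]
    rw [List.map_cons, List.prod_cons, mul_apply_eq_comp, hrec, map_sum,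
      Finset.sum_congr rfl step, Finset.sum_add_distrib, Finset.sum_powerset_insert hlS]
    congr 1 <;> refine Finset.sum_congr rfl fun K hK => ?_
    · simp [hlK K hK]
    · simp [Finset.erase_insert (hlK K hK)]

end CARModel

/-- let `L = {l₁ < l₂ < ... < l_p}` be a finite subset of `ℤ`. Then there is
a function `c` assigning to each subset `L₁ ⊆ L` a NONZERO real number `c(L₁)` such that
`(a_{l₁}∘⋯∘a_{l_p}∘a_{l_p}*∘⋯∘a_{l₁}*) Ω = Σ_{L₁ ⊆ L} c(L₁)·e_{(L₁,L₁)}`. -/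
theorem stmt10 (lam : ℤ → ℝ) (hlam : ∀ l, 0 < lam l ∧ lam l < 1)
    (a : ℤ → CARSpace →L[ℂ] CARSpace) (ha : IsCAR_a lam a)
    (L : Finset ℤ) :
    ∃ c : Finset ℤ → ℝ, (∀ L₁ ⊆ L, c L₁ ≠ 0) ∧
      (((L.sort (· ≤ ·)).map a).prod *
          ((L.sort (· ≤ ·)).reverse.map fun l => star (a l)).prod) carΩ =
        ∑ L₁ ∈ L.powerset, (c L₁ : ℂ) • carE (L₁, L₁) := by
  set s := L.sort (· ≤ ·)
  have hs : s.Nodup := L.sort_nodup _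
  have hsL : s.toFinset = L := L.sort_toFinset _
  obtain ⟨γ, hγ, hstar⟩ := exists_prod_star_a_apply_carE ha (fun l => (hlam l).1) s.reverse
    (List.nodup_reverse.mpr hs) (A := ∅) (B := ∅) (by simp) (by simp)
  obtain ⟨c, hc, hann⟩ := exists_prod_a_apply_carE ha hlam s hs (A := ∅) (B := L) (by simp)
    (fun l hl => by rwa [← hsL, List.mem_toFinset])
  refine ⟨fun K => γ * c K, fun K hK => mul_ne_zero hγ (hc K (hsL ▸ hK)), ?_⟩
  rw [mul_apply_eq_comp, carΩ, hstar, List.toFinset_reverse, hsL, Finset.empty_union, map_smul,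
    hann, hsL, Finset.sdiff_self, Finset.smul_sum]
  refine Finset.sum_congr rfl fun K _ => ?_
  rw [smul_smul, Finset.empty_union, Complex.ofReal_mul]

end
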